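/- arXiv:2109.09469 — 2 statements merged into one kernel-verified Lean document; each statement's English description precedes it below -/
import Mathlib

section
/- Multiplier estimate (Lemma 3.4): Let a < b be reals, q(x) = m·x + n an affine function (m, n ∈ ℝ), and let V, P be real-valued C² functions on [a,b]×[0,T] satisfying ρV_tt − αV_xx + γβP_xx = 0 and μP_tt − βP_xx + γβV_xx = 0. Define I(x,t) = ρV_t(x,t)² + α₁V_x(x,t)² + μP_t(x,t)² + β(γV_x − P_x)(x,t)² and E₁(t) = ∫ₐᵇ I(x,t) dx. Then, with M = 2·(sup_{x∈[a,b]}|q(x)|)·max{ρ, (1+2γ²)/α₁, μ, 2/β}, one has | ∫₀ᵀ ( q(b)I(b,t) − q(a)I(a,t) ) dt − m·∫₀ᵀ E₁(t) dt | ≤ M·( E₁(T) + E₁(0) ). -/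
open MeasureTheory Set


/-- Partial derivative in time of a function `V : ℝ → ℝ → ℝ` (first argument: space,
second argument: time). -/
noncomputable def partialT (V : ℝ → ℝ → ℝ) (x t : ℝ) : ℝ := deriv (fun s => V x s) t

/-- Second partial derivative in time. -/
noncomputable def partialTT (V : ℝ → ℝ → ℝ) (x t : ℝ) : ℝ := deriv (fun s => partialT V x s) t

/-- Partial derivative in space. -/
noncomputable def partialX (V : ℝ → ℝ → ℝ) (x t : ℝ) : ℝ := deriv (fun y => V y t) x

/-- Second partial derivative in space. -/
noncomputable def partialXX (V : ℝ → ℝ → ℝ) (x t : ℝ) : ℝ := deriv (fun y => partialX V y t) x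

/-- The pointwise energy density of the piezoelectric system. -/
noncomputable def densityI (ρ μ β α₁ γ : ℝ) (V P : ℝ → ℝ → ℝ) (x t : ℝ) : ℝ :=
  ρ * partialT V x t ^ 2 + α₁ * partialX V x t ^ 2 + μ * partialT P x t ^ 2
    + β * (γ * partialX V x t - partialX P x t) ^ 2

/-- The (first-order) energy over the interval `[a, b]`. -/
noncomputable def energyE₁ (ρ μ β α₁ γ a b : ℝ) (V P : ℝ → ℝ → ℝ) (t : ℝ) : ℝ :=
  ∫ x in a..b, densityI ρ μ β α₁ γ V P x t



lemma sliceT {F : ℝ × ℝ → ℝ} (hF : Differentiable ℝ F) (x t : ℝ) :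
    HasDerivAt (fun s => F (x, s)) (fderiv ℝ F (x, t) (0, 1)) t := by
  have h : HasDerivAt (fun s : ℝ => ((x, s) : ℝ × ℝ)) ((0 : ℝ), (1 : ℝ)) t :=
    HasDerivAt.prodMk (hasDerivAt_const t x) (hasDerivAt_id t)
  exact (hF (x, t)).hasFDerivAt.comp_hasDerivAt t h

lemma sliceX {F : ℝ × ℝ → ℝ} (hF : Differentiable ℝ F) (x t : ℝ) :
    HasDerivAt (fun y => F (y, t)) (fderiv ℝ F (x, t) (1, 0)) x := by
  have h : HasDerivAt (fun y : ℝ => ((y, t) : ℝ × ℝ)) ((1 : ℝ), (0 : ℝ)) x :=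
    HasDerivAt.prodMk (hasDerivAt_id x) (hasDerivAt_const x t)
  exact (hF (x, t)).hasFDerivAt.comp_hasDerivAt x h

lemma contD {F : ℝ × ℝ → ℝ} (hF : ContDiff ℝ 2 F) (u : ℝ × ℝ) :
    ContDiff ℝ 1 (fun p => fderiv ℝ F p u) :=
  (hF.fderiv_right (by norm_num : (1:WithTop ℕ∞) + 1 ≤ 2)).clm_apply contDiff_const

lemma contD2 {G : ℝ × ℝ → ℝ} (hG : ContDiff ℝ 1 G) (u : ℝ × ℝ) :
    Continuous (fun p => fderiv ℝ G p u) :=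
  (hG.continuous_fderiv one_ne_zero).clm_apply continuous_const

lemma fderiv_swap {F : ℝ × ℝ → ℝ} (hF : ContDiff ℝ 2 F) (p : ℝ × ℝ) (u v : ℝ × ℝ) :
    fderiv ℝ (fun y => fderiv ℝ F y u) p v = fderiv ℝ (fun y => fderiv ℝ F y v) p u := by
  have hdf : Differentiable ℝ (fderiv ℝ F) :=
    (hF.fderiv_right (by norm_num : (1:WithTop ℕ∞) + 1 ≤ 2)).differentiable one_ne_zero
  have key : ∀ w : ℝ × ℝ, fderiv ℝ (fun y => fderiv ℝ F y w) p
      = (fderiv ℝ (fderiv ℝ F) p).flip w := by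
    intro w
    have := fderiv_clm_apply (c := fderiv ℝ F) (u := fun _ => w) (hdf p)
      (differentiableAt_const w)
    simpa using this
  have hsymm := second_derivative_symmetric (f := F) (f' := fderiv ℝ F)
    (f'' := fderiv ℝ (fderiv ℝ F) p)
    (fun y => (hF.differentiable two_ne_zero y).hasFDerivAt) (hdf p).hasFDerivAt u v
  rw [key u, key v]
  simpa using hsymm.symm

lemma key_ineq {ρ μ β α₁ γ K : ℝ} (hρ : 0 < ρ) (hμ : 0 < μ) (hβ : 0 < β) (hα₁ : 0 < α₁)
    (hK : K = max (max ρ ((1 + 2 * γ ^ 2) / α₁)) (max μ (2 / β))) (u v p w : ℝ) :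
    |2 * (ρ * u * v + μ * p * w)|
      ≤ 2 * K * (ρ * u ^ 2 + α₁ * v ^ 2 + μ * p ^ 2 + β * (γ * v - w) ^ 2) := by
  have hK1 : ρ ≤ K := hK ▸ le_max_of_le_left (le_max_left _ _)
  have hK2 : μ ≤ K := hK ▸ le_max_of_le_right (le_max_left _ _)
  have hK3 : 1 + 2 * γ ^ 2 ≤ K * α₁ := by
    have h : (1 + 2 * γ ^ 2) / α₁ ≤ K := hK ▸ le_max_of_le_left (le_max_right _ _)
    calc 1 + 2 * γ ^ 2 = ((1 + 2 * γ ^ 2) / α₁) * α₁ := by field_simp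
    _ ≤ K * α₁ := by nlinarith
  have hK4 : 2 ≤ K * β := by
    have h : 2 / β ≤ K := hK ▸ le_max_of_le_right (le_max_right _ _)
    calc (2:ℝ) = (2 / β) * β := by field_simp
    _ ≤ K * β := by nlinarith
  have hKpos : 0 < K := lt_of_lt_of_le hρ hK1
  have hA : ρ + 2 * μ * γ ^ 2 ≤ 2 * K ^ 2 * α₁ := by
    nlinarith [mul_le_mul_of_nonneg_left hK3 hKpos.le,
      mul_nonneg (sub_nonneg.mpr hK2) (sq_nonneg γ), sq_nonneg γ]
  have hB : μ ≤ K ^ 2 * β := by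
    nlinarith [mul_le_mul_of_nonneg_left hK4 hKpos.le]
  have main : ∀ u' p' : ℝ, 2 * (ρ * u' * v + μ * p' * w)
      ≤ 2 * K * (ρ * u' ^ 2 + α₁ * v ^ 2 + μ * p' ^ 2 + β * (γ * v - w) ^ 2) := by
    intro u' p'
    have hmul : K * (2 * (ρ * u' * v + μ * p' * w))
        ≤ K * (2 * K * (ρ * u' ^ 2 + α₁ * v ^ 2 + μ * p' ^ 2 + β * (γ * v - w) ^ 2)) := by
      nlinarith [mul_nonneg hρ.le (sq_nonneg (K * u' - v)),
        mul_nonneg hμ.le (sq_nonneg (K * p' - w)),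
        mul_nonneg (by linarith : (0:ℝ) ≤ 2 * K ^ 2 * α₁ - ρ - 2 * μ * γ ^ 2) (sq_nonneg v),
        mul_nonneg (by linarith : (0:ℝ) ≤ 2 * K ^ 2 * β - 2 * μ) (sq_nonneg (γ * v - w)),
        mul_nonneg hμ.le (sq_nonneg (2 * γ * v - w)),
        mul_nonneg hρ.le (sq_nonneg (K * u')), mul_nonneg hμ.le (sq_nonneg (K * p'))]
    exact le_of_mul_le_mul_left hmul hKpos
  rw [abs_le]
  constructor
  · have := main (-u) (-p)
    nlinarith [this]
  · exact main u p


/-- Multiplier estimate (Lemma 3.4): the boundary observability term differs from the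
averaged interior energy by at most `M (E₁(T) + E₁(0))`, with
`M = 2 ‖q‖_∞ max{ρ, (1+2γ²)/α₁, μ, 2/β}`. -/
theorem multiplier_estimate
    (ρ μ β T γ α₁ α : ℝ)
    (hρ : 0 < ρ) (hμ : 0 < μ) (hβ : 0 < β) (hT : 0 < T) (hα₁ : 0 < α₁)
    (hα : α = α₁ + γ ^ 2 * β)
    (a b : ℝ) (hab : a < b)
    (m n : ℝ) (q : ℝ → ℝ) (hq : ∀ x, q x = m * x + n)
    (V P : ℝ → ℝ → ℝ)
    (hV : ContDiff ℝ 2 (fun p : ℝ × ℝ => V p.1 p.2))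
    (hP : ContDiff ℝ 2 (fun p : ℝ × ℝ => P p.1 p.2))
    (heq1 : ∀ x ∈ Set.Icc a b, ∀ t ∈ Set.Icc (0:ℝ) T,
      ρ * partialTT V x t - α * partialXX V x t + γ * β * partialXX P x t = 0)
    (heq2 : ∀ x ∈ Set.Icc a b, ∀ t ∈ Set.Icc (0:ℝ) T,
      μ * partialTT P x t - β * partialXX P x t + γ * β * partialXX V x t = 0)
    (M : ℝ)
    (hM : M = 2 * sSup ((fun x => |q x|) '' Set.Icc a b)
        * max (max ρ ((1 + 2 * γ ^ 2) / α₁)) (max μ (2 / β))) :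
    |(∫ t in (0:ℝ)..T,
          (q b * densityI ρ μ β α₁ γ V P b t - q a * densityI ρ μ β α₁ γ V P a t))
        - m * ∫ t in (0:ℝ)..T, energyE₁ ρ μ β α₁ γ a b V P t|
      ≤ M * (energyE₁ ρ μ β α₁ γ a b V P T + energyE₁ ρ μ β α₁ γ a b V P 0) := by
  -- notation
  set K : ℝ := max (max ρ ((1 + 2 * γ ^ 2) / α₁)) (max μ (2 / β)) with hK
  set S : ℝ := sSup ((fun x => |q x|) '' Set.Icc a b) with hS
  set F : ℝ × ℝ → ℝ := fun p => V p.1 p.2 with hFdef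
  set G : ℝ × ℝ → ℝ := fun p => P p.1 p.2 with hGdef
  have hFd : Differentiable ℝ F := hV.differentiable two_ne_zero
  have hGd : Differentiable ℝ G := hP.differentiable two_ne_zero
  set Vt : ℝ × ℝ → ℝ := fun p => fderiv ℝ F p (0, 1) with hVtdef
  set Vx : ℝ × ℝ → ℝ := fun p => fderiv ℝ F p (1, 0) with hVxdef
  set Pt : ℝ × ℝ → ℝ := fun p => fderiv ℝ G p (0, 1) with hPtdef
  set Px : ℝ × ℝ → ℝ := fun p => fderiv ℝ G p (1, 0) with hPxdef
  have hVt1 : ContDiff ℝ 1 Vt := contD hV _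
  have hVx1 : ContDiff ℝ 1 Vx := contD hV _
  have hPt1 : ContDiff ℝ 1 Pt := contD hP _
  have hPx1 : ContDiff ℝ 1 Px := contD hP _
  set Vtt : ℝ × ℝ → ℝ := fun p => fderiv ℝ Vt p (0, 1) with hVttdef
  set Vtx : ℝ × ℝ → ℝ := fun p => fderiv ℝ Vt p (1, 0) with hVtxdef
  set Vxt : ℝ × ℝ → ℝ := fun p => fderiv ℝ Vx p (0, 1) with hVxtdef
  set Vxx : ℝ × ℝ → ℝ := fun p => fderiv ℝ Vx p (1, 0) with hVxxdef
  set Ptt : ℝ × ℝ → ℝ := fun p => fderiv ℝ Pt p (0, 1) with hPttdef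
  set Ptx : ℝ × ℝ → ℝ := fun p => fderiv ℝ Pt p (1, 0) with hPtxdef
  set Pxt : ℝ × ℝ → ℝ := fun p => fderiv ℝ Px p (0, 1) with hPxtdef
  set Pxx : ℝ × ℝ → ℝ := fun p => fderiv ℝ Px p (1, 0) with hPxxdef
  -- continuity
  have hVtc : Continuous Vt := hVt1.continuous
  have hVxc : Continuous Vx := hVx1.continuous
  have hPtc : Continuous Pt := hPt1.continuous
  have hPxc : Continuous Px := hPx1.continuous
  have hVttc : Continuous Vtt := contD2 hVt1 _
  have hVtxc : Continuous Vtx := contD2 hVt1 _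
  have hVxtc : Continuous Vxt := contD2 hVx1 _
  have hVxxc : Continuous Vxx := contD2 hVx1 _
  have hPttc : Continuous Ptt := contD2 hPt1 _
  have hPtxc : Continuous Ptx := contD2 hPt1 _
  have hPxtc : Continuous Pxt := contD2 hPx1 _
  have hPxxc : Continuous Pxx := contD2 hPx1 _
  -- symmetry of second derivatives
  have hsymV : ∀ p, Vxt p = Vtx p := fun p => fderiv_swap hV p (1, 0) (0, 1)
  have hsymP : ∀ p, Pxt p = Ptx p := fun p => fderiv_swap hP p (1, 0) (0, 1)
  -- slice derivative facts
  have hVt_x : ∀ x t, HasDerivAt (fun y => Vt (y, t)) (Vtx (x, t)) x :=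
    fun x t => sliceX (hVt1.differentiable one_ne_zero) x t
  have hVx_x : ∀ x t, HasDerivAt (fun y => Vx (y, t)) (Vxx (x, t)) x :=
    fun x t => sliceX (hVx1.differentiable one_ne_zero) x t
  have hPt_x : ∀ x t, HasDerivAt (fun y => Pt (y, t)) (Ptx (x, t)) x :=
    fun x t => sliceX (hPt1.differentiable one_ne_zero) x t
  have hPx_x : ∀ x t, HasDerivAt (fun y => Px (y, t)) (Pxx (x, t)) x :=
    fun x t => sliceX (hPx1.differentiable one_ne_zero) x t
  have hVt_t : ∀ x t, HasDerivAt (fun s => Vt (x, s)) (Vtt (x, t)) t :=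
    fun x t => sliceT (hVt1.differentiable one_ne_zero) x t
  have hVx_t : ∀ x t, HasDerivAt (fun s => Vx (x, s)) (Vxt (x, t)) t :=
    fun x t => sliceT (hVx1.differentiable one_ne_zero) x t
  have hPt_t : ∀ x t, HasDerivAt (fun s => Pt (x, s)) (Ptt (x, t)) t :=
    fun x t => sliceT (hPt1.differentiable one_ne_zero) x t
  have hPx_t : ∀ x t, HasDerivAt (fun s => Px (x, s)) (Pxt (x, t)) t :=
    fun x t => sliceT (hPx1.differentiable one_ne_zero) x t
  -- bridging partial derivatives
  have bVt : ∀ x t, partialT V x t = Vt (x, t) := fun x t => (sliceT hFd x t).deriv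
  have bVx : ∀ x t, partialX V x t = Vx (x, t) := fun x t => (sliceX hFd x t).deriv
  have bPt : ∀ x t, partialT P x t = Pt (x, t) := fun x t => (sliceT hGd x t).deriv
  have bPx : ∀ x t, partialX P x t = Px (x, t) := fun x t => (sliceX hGd x t).deriv
  have bVtt : ∀ x t, partialTT V x t = Vtt (x, t) := by
    intro x t
    have h : (fun s => partialT V x s) = fun s => Vt (x, s) := funext fun s => bVt x s
    show deriv (fun s => partialT V x s) t = Vtt (x, t)
    rw [h]
    exact (hVt_t x t).deriv
  have bVxx : ∀ x t, partialXX V x t = Vxx (x, t) := by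
    intro x t
    have h : (fun y => partialX V y t) = fun y => Vx (y, t) := funext fun y => bVx y t
    show deriv (fun y => partialX V y t) x = Vxx (x, t)
    rw [h]
    exact (hVx_x x t).deriv
  have bPtt : ∀ x t, partialTT P x t = Ptt (x, t) := by
    intro x t
    have h : (fun s => partialT P x s) = fun s => Pt (x, s) := funext fun s => bPt x s
    show deriv (fun s => partialT P x s) t = Ptt (x, t)
    rw [h]
    exact (hPt_t x t).deriv
  have bPxx : ∀ x t, partialXX P x t = Pxx (x, t) := by
    intro x t
    have h : (fun y => partialX P y t) = fun y => Px (y, t) := funext fun y => bPx y t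
    show deriv (fun y => partialX P y t) x = Pxx (x, t)
    rw [h]
    exact (hPx_x x t).deriv
  -- key functions
  set Iden : ℝ × ℝ → ℝ := fun p =>
    ρ * Vt p ^ 2 + α₁ * Vx p ^ 2 + μ * Pt p ^ 2 + β * (γ * Vx p - Px p) ^ 2 with hIden
  set Gfun : ℝ × ℝ → ℝ := fun p => 2 * (ρ * (Vt p * Vx p) + μ * (Pt p * Px p)) with hGfun
  set IxF : ℝ × ℝ → ℝ := fun p =>
    2 * ρ * Vt p * Vtx p + 2 * α₁ * Vx p * Vxx p + 2 * μ * Pt p * Ptx p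
      + 2 * β * (γ * Vx p - Px p) * (γ * Vxx p - Pxx p) with hIxF
  set GtF : ℝ × ℝ → ℝ := fun p =>
    2 * ((ρ * (Vtt p * Vx p + Vt p * Vxt p)) + μ * (Ptt p * Px p + Pt p * Pxt p)) with hGtF
  have hIdenc : Continuous Iden := by
    rw [hIden]; fun_prop
  have hGfunc : Continuous Gfun := by
    rw [hGfun]; fun_prop
  have hIxFc : Continuous IxF := by
    rw [hIxF]; fun_prop
  have hGtFc : Continuous GtF := by
    rw [hGtF]; fun_prop
  -- q facts
  have hqf : q = fun y => m * y + n := funext hq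
  have hqc : Continuous q := by rw [hqf]; fun_prop
  have hq' : ∀ x : ℝ, HasDerivAt q m x := by
    intro x
    rw [hqf]
    simpa using ((hasDerivAt_id x).const_mul m).add_const n
  -- spatial derivative of the energy density
  have hIx : ∀ x t, HasDerivAt (fun y => Iden (y, t)) (IxF (x, t)) x := by
    intro x t
    have h1 := ((hVt_x x t).pow 2).const_mul ρ
    have h2 := ((hVx_x x t).pow 2).const_mul α₁
    have h3 := ((hPt_x x t).pow 2).const_mul μ
    have h4 := ((((hVx_x x t).const_mul γ).sub (hPx_x x t)).pow 2).const_mul β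
    have h := ((h1.add h2).add h3).add h4
    rw [hIden]
    convert h using 1
    rfl
    rfl
    rfl
    simp only [hIxF, Pi.sub_apply, Nat.reduceSub, pow_one]
    try push_cast
    try ring
  -- time derivative of the multiplier function
  have hGt : ∀ x t, HasDerivAt (fun s => Gfun (x, s)) (GtF (x, t)) t := by
    intro x t
    have h := ((((hVt_t x t).mul (hVx_t x t)).const_mul ρ).add
      (((hPt_t x t).mul (hPx_t x t)).const_mul μ)).const_mul 2
    rw [hGfun]
    convert h using 1
    try simp only [hGtF]
    try ring
    rfl
    rfl
    rfl
  -- boundary identity for each time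
  have hq'I : ∀ t x, HasDerivAt (fun y => q y * Iden (y, t))
      (m * Iden (x, t) + q x * IxF (x, t)) x := fun t x => (hq' x).mul (hIx x t)
  have hbd : ∀ t, (∫ y in a..b, (m * Iden (y, t) + q y * IxF (y, t)))
      = q b * Iden (b, t) - q a * Iden (a, t) := by
    intro t
    exact intervalIntegral.integral_eq_sub_of_hasDerivAt (fun x _ => hq'I t x)
      (Continuous.intervalIntegrable (by fun_prop) a b)
  -- the PDE identity on the rectangle
  have hIG : ∀ x ∈ Set.Icc a b, ∀ t ∈ Set.Icc (0:ℝ) T, IxF (x, t) = GtF (x, t) := by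
    intro x hx t ht
    have h1 := heq1 x hx t ht
    have h2 := heq2 x hx t ht
    rw [bVtt, bVxx, bPxx] at h1
    rw [bPtt, bPxx, bVxx] at h2
    have s1 := hsymV (x, t)
    have s2 := hsymP (x, t)
    simp only [hIxF, hGtF]
    linear_combination (-2 * Vx (x, t)) * h1 + (-2 * Px (x, t)) * h2 +
      (-2 * ρ * Vt (x, t)) * s1 + (-2 * μ * Pt (x, t)) * s2 +
      (-2 * Vx (x, t) * Vxx (x, t)) * hα
  -- FTC in time
  have hFTC : ∀ x, (∫ t in (0:ℝ)..T, GtF (x, t)) = Gfun (x, T) - Gfun (x, 0) := by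
    intro x
    exact intervalIntegral.integral_eq_sub_of_hasDerivAt (fun t _ => hGt x t)
      (Continuous.intervalIntegrable (by fun_prop) 0 T)
  -- bridge the density and energy
  have hdI : ∀ x t, densityI ρ μ β α₁ γ V P x t = Iden (x, t) := by
    intro x t
    simp only [densityI, bVt, bVx, bPt, bPx, hIden]
  have hE : ∀ t, energyE₁ ρ μ β α₁ γ a b V P t = ∫ x in a..b, Iden (x, t) := by
    intro t
    exact intervalIntegral.integral_congr fun x _ => hdI x t
  -- parametric continuity
  have hEc : Continuous fun t => ∫ x in a..b, Iden (x, t) := by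
    apply intervalIntegral.continuous_parametric_intervalIntegral_of_continuous'
      (f := fun t x => Iden (x, t)) (μ := volume) ?_ a b
    exact hIdenc.comp (continuous_snd.prodMk continuous_fst)
  have hWc : Continuous fun t => ∫ x in a..b, q x * IxF (x, t) := by
    apply intervalIntegral.continuous_parametric_intervalIntegral_of_continuous'
      (f := fun t x => q x * IxF (x, t)) (μ := volume) ?_ a b
    exact (hqc.comp continuous_snd).mul (hIxFc.comp (continuous_snd.prodMk continuous_fst))
  -- step 1
  have hW : ∀ t, q b * Iden (b, t) - q a * Iden (a, t)
      = m * (∫ x in a..b, Iden (x, t)) + ∫ x in a..b, q x * IxF (x, t) := by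
    intro t
    rw [← hbd t, intervalIntegral.integral_add
      (Continuous.intervalIntegrable (by fun_prop) a b)
      (Continuous.intervalIntegrable (by fun_prop) a b),
      intervalIntegral.integral_const_mul]
  have step1 : (∫ t in (0:ℝ)..T, (q b * Iden (b, t) - q a * Iden (a, t)))
      - m * ∫ t in (0:ℝ)..T, ∫ x in a..b, Iden (x, t)
      = ∫ t in (0:ℝ)..T, ∫ x in a..b, q x * IxF (x, t) := by
    have hcong : (∫ t in (0:ℝ)..T, (q b * Iden (b, t) - q a * Iden (a, t)))
        = ∫ t in (0:ℝ)..T,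
            (m * (∫ x in a..b, Iden (x, t)) + ∫ x in a..b, q x * IxF (x, t)) :=
      intervalIntegral.integral_congr fun t _ => hW t
    rw [hcong, intervalIntegral.integral_add (f := fun t => m * ∫ x in a..b, Iden (x, t))
      ((continuous_const.mul hEc).intervalIntegrable 0 T) (hWc.intervalIntegrable 0 T),
      intervalIntegral.integral_const_mul]
    ring
  -- step 2 : replace IxF by GtF on the rectangle
  have step2 : (∫ t in (0:ℝ)..T, ∫ x in a..b, q x * IxF (x, t))
      = ∫ t in (0:ℝ)..T, ∫ x in a..b, q x * GtF (x, t) := by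
    apply intervalIntegral.integral_congr
    intro t ht
    rw [Set.uIcc_of_le hT.le] at ht
    apply intervalIntegral.integral_congr
    intro x hx
    rw [Set.uIcc_of_le hab.le] at hx
    show q x * IxF (x, t) = q x * GtF (x, t)
    rw [hIG x hx t ht]
  -- step 3 : Fubini
  have step3 : (∫ t in (0:ℝ)..T, ∫ x in a..b, q x * GtF (x, t))
      = ∫ x in a..b, ∫ t in (0:ℝ)..T, q x * GtF (x, t) := by
    simp_rw [intervalIntegral.integral_of_le hT.le, intervalIntegral.integral_of_le hab.le]
    apply MeasureTheory.integral_integral_swap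
    rw [Measure.prod_restrict, ← Measure.volume_eq_prod]
    have hcu : Continuous (Function.uncurry fun t x => q x * GtF (x, t)) :=
      (hqc.comp continuous_snd).mul (hGtFc.comp (continuous_snd.prodMk continuous_fst))
    have hint : IntegrableOn (Function.uncurry fun t x => q x * GtF (x, t))
        (Set.Icc (0:ℝ) T ×ˢ Set.Icc a b) volume :=
      hcu.continuousOn.integrableOn_compact (isCompact_Icc.prod isCompact_Icc)
    exact hint.mono_set (Set.prod_mono Set.Ioc_subset_Icc_self Set.Ioc_subset_Icc_self)
  -- step 4 : FTC inside
  have step4 : (∫ x in a..b, ∫ t in (0:ℝ)..T, q x * GtF (x, t))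
      = ∫ x in a..b, q x * (Gfun (x, T) - Gfun (x, 0)) := by
    apply intervalIntegral.integral_congr
    intro x _
    show (∫ t in (0:ℝ)..T, q x * GtF (x, t)) = q x * (Gfun (x, T) - Gfun (x, 0))
    rw [intervalIntegral.integral_const_mul, hFTC x]
  -- sup bound for q
  have hql : ∀ x ∈ Set.Icc a b, |q x| ≤ S := by
    intro x hx
    apply le_csSup ((isCompact_Icc.image (show Continuous fun x => |q x| by fun_prop)).bddAbove)
    exact ⟨x, hx, rfl⟩
  -- pointwise bound
  have hGb : ∀ p : ℝ × ℝ, |Gfun p| ≤ 2 * K * Iden p := by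
    intro p
    have hki := key_ineq hρ hμ hβ hα₁ hK (Vt p) (Vx p) (Pt p) (Px p)
    simp only [hGfun, hIden]
    have e : 2 * (ρ * (Vt p * Vx p) + μ * (Pt p * Px p))
        = 2 * (ρ * Vt p * Vx p + μ * Pt p * Px p) := by ring
    rw [e]
    exact hki
  -- final estimate
  have hfin : |∫ x in a..b, q x * (Gfun (x, T) - Gfun (x, 0))|
      ≤ M * ((∫ x in a..b, Iden (x, T)) + ∫ x in a..b, Iden (x, 0)) := by
    have habs := intervalIntegral.abs_integral_le_integral_abs
      (f := fun x => q x * (Gfun (x, T) - Gfun (x, 0))) (μ := volume) hab.le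
    have hmono : (∫ x in a..b, |q x * (Gfun (x, T) - Gfun (x, 0))|)
        ≤ ∫ x in a..b, (S * (2 * K * Iden (x, T) + 2 * K * Iden (x, 0))) := by
      apply intervalIntegral.integral_mono_on hab.le
      · exact Continuous.intervalIntegrable (by fun_prop) a b
      · exact Continuous.intervalIntegrable (by fun_prop) a b
      · intro x hx
        have hS0 : 0 ≤ S := le_trans (abs_nonneg _) (hql x hx)
        have e1 := hGb (x, T)
        have e2 := hGb (x, 0)
        have e3 : |q x * (Gfun (x, T) - Gfun (x, 0))|
            = |q x| * |Gfun (x, T) - Gfun (x, 0)| := abs_mul _ _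
        have e4 : |Gfun (x, T) - Gfun (x, 0)| ≤ |Gfun (x, T)| + |Gfun (x, 0)| :=
          abs_sub _ _
        have e5 := hql x hx
        nlinarith [abs_nonneg (Gfun (x, T) - Gfun (x, 0)), abs_nonneg (q x),
          abs_nonneg (Gfun (x, T)), abs_nonneg (Gfun (x, 0))]
    have hsplit : (∫ x in a..b, (S * (2 * K * Iden (x, T) + 2 * K * Iden (x, 0))))
        = M * ((∫ x in a..b, Iden (x, T)) + ∫ x in a..b, Iden (x, 0)) := by
      have hcong : (∫ x in a..b, (S * (2 * K * Iden (x, T) + 2 * K * Iden (x, 0))))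
          = ∫ x in a..b, ((2 * S * K) * Iden (x, T) + (2 * S * K) * Iden (x, 0)) :=
        intervalIntegral.integral_congr fun x _ => by ring
      rw [hcong, intervalIntegral.integral_add
        (Continuous.intervalIntegrable (by fun_prop) a b)
        (Continuous.intervalIntegrable (by fun_prop) a b),
        intervalIntegral.integral_const_mul, intervalIntegral.integral_const_mul, hM]
      ring
    calc |∫ x in a..b, q x * (Gfun (x, T) - Gfun (x, 0))|
        ≤ ∫ x in a..b, |q x * (Gfun (x, T) - Gfun (x, 0))| := habs
      _ ≤ ∫ x in a..b, (S * (2 * K * Iden (x, T) + 2 * K * Iden (x, 0))) := hmono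
      _ = M * ((∫ x in a..b, Iden (x, T)) + ∫ x in a..b, Iden (x, 0)) := hsplit
  -- assemble
  simp only [hdI, hE]
  rw [step1, step2, step3, step4]
  exact hfin
end

section
/- Boundary-term estimate in the proof of Theorem 4.5: There exists a constant C > 0, depending only on ρ, μ, α₁, β, γ, ξ₁, ξ₂, m₁, m₂ and L (and not on the resolvent data or λ), such that for every λ ∈ ℝ and all resolvent data, ρ|Φ(L)|² + α₁|V′(L)|² + μ|Θ(L)|² + β|γV′(L) − P′(L)|² ≤ C·(1 + λ²)·‖U‖·‖F‖ + C·‖F‖², where ‖U‖² = ∫₀ᴸ( ρ|Φ|² + μ|Θ|² + α₁|V′|² + β|γV′ − P′|² ) dx + m₁|u|² + m₂|η|² and ‖F‖² = ∫₀ᴸ( ρ|f₂|² + μ|f₄|² + α₁|f₁′|² + β|γf₁′ − f₃′|² ) dx + m₁|f₅|² + m₂|f₆|². -/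
open Complex

/-- Resolvent data for the damped piezoelectric beam system with magnetic effect and
tip body: solutions of the resolvent (spectral) equation `iλU − AU = F` written in
components, together with the boundary conditions. -/
structure ResolventData (ρ μ β m₁ m₂ ξ₁ ξ₂ γ α₁ α L lam : ℝ) where
  V : ℝ → ℂ
  P : ℝ → ℂ
  Φ : ℝ → ℂ
  Θ : ℝ → ℂ
  f₁ : ℝ → ℂ
  f₂ : ℝ → ℂ
  f₃ : ℝ → ℂ
  f₄ : ℝ → ℂ
  u : ℂ
  η : ℂ
  f₅ : ℂ
  f₆ : ℂ
  hV : ContDiff ℝ 2 V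
  hP : ContDiff ℝ 2 P
  hΦ : ContDiff ℝ 1 Φ
  hΘ : ContDiff ℝ 1 Θ
  hf₁ : ContDiff ℝ 1 f₁
  hf₃ : ContDiff ℝ 1 f₃
  hf₂ : Continuous f₂
  hf₄ : Continuous f₄
  eq1 : ∀ x ∈ Set.Icc (0:ℝ) L, Complex.I * (lam : ℂ) * V x - Φ x = f₁ x
  eq2 : ∀ x ∈ Set.Icc (0:ℝ) L,
    Complex.I * (lam : ℂ) * (ρ : ℂ) * Φ x - (α : ℂ) * deriv (deriv V) x
      + (γ : ℂ) * (β : ℂ) * deriv (deriv P) x = (ρ : ℂ) * f₂ x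
  eq3 : ∀ x ∈ Set.Icc (0:ℝ) L, Complex.I * (lam : ℂ) * P x - Θ x = f₃ x
  eq4 : ∀ x ∈ Set.Icc (0:ℝ) L,
    Complex.I * (lam : ℂ) * (μ : ℂ) * Θ x - (β : ℂ) * deriv (deriv P) x
      + (γ : ℂ) * (β : ℂ) * deriv (deriv V) x = (μ : ℂ) * f₄ x
  bV0 : V 0 = 0
  bP0 : P 0 = 0
  bΦ0 : Φ 0 = 0
  bΘ0 : Θ 0 = 0
  bΦL : Φ L = u
  bΘL : Θ L = η
  bu : (Complex.I * (lam : ℂ) * (m₁ : ℂ) + (ξ₁ : ℂ)) * u + (α : ℂ) * deriv V L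
      - (γ : ℂ) * (β : ℂ) * deriv P L = (m₁ : ℂ) * f₅
  bη : (Complex.I * (lam : ℂ) * (m₂ : ℂ) + (ξ₂ : ℂ)) * η + (β : ℂ) * deriv P L
      - (γ : ℂ) * (β : ℂ) * deriv V L = (m₂ : ℂ) * f₆

variable {ρ μ β m₁ m₂ ξ₁ ξ₂ γ α₁ α L lam : ℝ}

/-- The squared interior norm `N²` of the resolvent data. -/
noncomputable def Nsq (D : ResolventData ρ μ β m₁ m₂ ξ₁ ξ₂ γ α₁ α L lam) : ℝ :=
  ∫ x in (0:ℝ)..L,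
    (ρ * ‖D.Φ x‖ ^ 2 + μ * ‖D.Θ x‖ ^ 2
      + α₁ * ‖deriv D.V x‖ ^ 2
      + β * ‖(γ : ℂ) * deriv D.V x - deriv D.P x‖ ^ 2)

/-- The squared state-space norm `‖U‖²` of the resolvent data. -/
noncomputable def Usq (D : ResolventData ρ μ β m₁ m₂ ξ₁ ξ₂ γ α₁ α L lam) : ℝ :=
  Nsq D + m₁ * ‖D.u‖ ^ 2 + m₂ * ‖D.η‖ ^ 2

/-- The squared state-space norm `‖F‖²` of the right-hand side of the resolvent
equation. -/
noncomputable def Fsq (D : ResolventData ρ μ β m₁ m₂ ξ₁ ξ₂ γ α₁ α L lam) : ℝ :=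
  (∫ x in (0:ℝ)..L,
      (ρ * ‖D.f₂ x‖ ^ 2 + μ * ‖D.f₄ x‖ ^ 2
        + α₁ * ‖deriv D.f₁ x‖ ^ 2
        + β * ‖(γ : ℂ) * deriv D.f₁ x - deriv D.f₃ x‖ ^ 2))
    + m₁ * ‖D.f₅‖ ^ 2 + m₂ * ‖D.f₆‖ ^ 2

/-!
The resolvent equations make the real part of the interior integrand of `⟨F, U⟩` an exact
derivative: minus that of the real part of the power flux
`conj Φ · (αV′ − γβP′) + conj Θ · (βP′ − γβV′)`. Since `Φ(0) = Θ(0) = 0`, the tip-body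
conditions at `L` turn this into the dissipation identity `Re ⟨F, U⟩ = ξ₁ |u|² + ξ₂ |η|²`, and
Cauchy–Schwarz bounds `|u|², |η|²` by `‖U‖ ‖F‖`. The same conditions express
`β (γV′(L) − P′(L))` and `α₁ V′(L)` through `u, η, f₅, f₆` with coefficients of size `1 + |λ|`,
which controls the remaining boundary terms.
-/

open ComplexConjugate MeasureTheory Set

theorem Real.sqrt_mul_sqrt_add_sqrt_mul_sqrt_le {a b c d : ℝ} (ha : 0 ≤ a) (hb : 0 ≤ b)
    (hc : 0 ≤ c) (hd : 0 ≤ d) : √a * √b + √c * √d ≤ √(a + c) * √(b + d) := by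
  simpa [Fin.sum_univ_two] using
    Real.sum_sqrt_mul_sqrt_le Finset.univ (f := ![a, c]) (g := ![b, d])
      (by simp [Fin.forall_fin_two, ha, hc]) (by simp [Fin.forall_fin_two, hb, hd])

theorem intervalIntegral.integral_sqrt_mul_sqrt_le {f g : ℝ → ℝ} {a b : ℝ} (hab : a ≤ b)
    (hf : Continuous f) (hg : Continuous g) (hf₀ : 0 ≤ f) (hg₀ : 0 ≤ g) :
    ∫ x in a..b, √(f x) * √(g x) ≤ √(∫ x in a..b, f x) * √(∫ x in a..b, g x) := by
  have memLp_sqrt : ∀ h : ℝ → ℝ, Continuous h → 0 ≤ h →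
      MemLp (fun x => √(h x)) (ENNReal.ofReal 2) (volume.restrict (Ioc a b)) := by
    intro h hh hh₀
    rw [ENNReal.ofReal_ofNat, memLp_two_iff_integrable_sq hh.sqrt.aestronglyMeasurable]
    simp only [Real.sq_sqrt (hh₀ _)]
    exact hh.integrableOn_Icc.mono_set Ioc_subset_Icc_self
  have holder := integral_mul_le_Lp_mul_Lq_of_nonneg Real.HolderConjugate.two_two
    (.of_forall fun x => Real.sqrt_nonneg (f x)) (.of_forall fun x => Real.sqrt_nonneg (g x))
    (memLp_sqrt f hf hf₀) (memLp_sqrt g hg hg₀)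
  simp only [Real.rpow_two, Real.sq_sqrt (hf₀ _), Real.sq_sqrt (hg₀ _),
    ← Real.sqrt_eq_rpow] at holder
  simpa only [intervalIntegral.integral_of_le hab] using holder

theorem norm_add_sq_le_two_mul {E : Type*} [SeminormedAddGroup E] (a b : E) :
    ‖a + b‖ ^ 2 ≤ 2 * (‖a‖ ^ 2 + ‖b‖ ^ 2) :=
  (pow_le_pow_left₀ (norm_nonneg _) (norm_add_le a b) 2).trans add_sq_le

theorem Complex.re_ofReal_mul_mul_conj_le {c : ℝ} (hc : 0 ≤ c) (z w : ℂ) :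
    ((c : ℂ) * z * conj w).re ≤ √(c * ‖z‖ ^ 2) * √(c * ‖w‖ ^ 2) := by
  calc ((c : ℂ) * z * conj w).re ≤ ‖(c : ℂ) * z * conj w‖ := re_le_norm _
    _ = √(c * ‖z‖ ^ 2) * √(c * ‖w‖ ^ 2) := by
      rw [Real.sqrt_mul hc, Real.sqrt_mul hc, Real.sqrt_sq (norm_nonneg _),
        Real.sqrt_sq (norm_nonneg _), mul_mul_mul_comm, Real.mul_self_sqrt hc]
      simp [abs_of_nonneg hc, mul_assoc]

noncomputable def feedbackConst (m ξ : ℝ) : ℝ := 2 * (m ^ 2 + ξ ^ 2) / ξ + 2 * m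

theorem feedbackConst_pos {m ξ : ℝ} (hm : 0 < m) (hξ : 0 < ξ) : 0 < feedbackConst m ξ := by
  unfold feedbackConst; positivity

theorem re_conj_mul_feedback (lam m ξ : ℝ) (z f : ℂ) :
    (conj z * (m * f - (I * lam * m + ξ) * z)).re = ((m : ℂ) * f * conj z).re - ξ * ‖z‖ ^ 2 := by
  rw [Complex.sq_norm, normSq_apply]
  simp only [mul_re, mul_im, sub_re, sub_im, add_re, add_im, conj_re, conj_im, I_re, I_im,
    ofReal_re, ofReal_im]
  ring

theorem norm_sq_feedback_le {lam m ξ R F : ℝ} (hm : 0 ≤ m) (hξ : 0 < ξ) {z f : ℂ}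
    (hz : ξ * ‖z‖ ^ 2 ≤ R) (hf : m * ‖f‖ ^ 2 ≤ F) :
    ‖(I * lam * m + ξ) * z - m * f‖ ^ 2 ≤ feedbackConst m ξ * ((1 + lam ^ 2) * R + F) := by
  have hcoef : ‖I * lam * m + ξ‖ ^ 2 ≤ (m ^ 2 + ξ ^ 2) * (1 + lam ^ 2) := by
    rw [Complex.sq_norm, normSq_apply]
    simp only [add_re, add_im, mul_re, mul_im, I_re, I_im, ofReal_re, ofReal_im]
    nlinarith [sq_nonneg m, sq_nonneg (lam * ξ)]
  have hz' : ‖z‖ ^ 2 ≤ R / ξ := by rw [le_div_iff₀ hξ]; linarith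
  have hR : 0 ≤ R := le_trans (by positivity) hz
  have hF : 0 ≤ F := le_trans (by positivity) hf
  calc ‖(I * lam * m + ξ) * z - m * f‖ ^ 2
      ≤ 2 * (‖I * lam * m + ξ‖ ^ 2 * ‖z‖ ^ 2 + m * (m * ‖f‖ ^ 2)) := by
        rw [sub_eq_add_neg]
        refine (norm_add_sq_le_two_mul _ _).trans_eq ?_
        rw [norm_neg, norm_mul, norm_mul, norm_real, Real.norm_of_nonneg hm, mul_pow]
        ring
    _ ≤ 2 * ((m ^ 2 + ξ ^ 2) * (1 + lam ^ 2) * (R / ξ) + m * F) := by gcongr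
    _ ≤ feedbackConst m ξ * ((1 + lam ^ 2) * R + F) := by
        have : 0 ≤ 2 * (m ^ 2 + ξ ^ 2) / ξ * F + 2 * m * ((1 + lam ^ 2) * R) := by positivity
        unfold feedbackConst
        linear_combination this

noncomputable def energyDensity (ρ μ α₁ β γ : ℝ) (a₁ a₂ a₃ a₄ : ℂ) : ℝ :=
  ρ * ‖a₁‖ ^ 2 + μ * ‖a₂‖ ^ 2 + α₁ * ‖a₃‖ ^ 2 + β * ‖(γ : ℂ) * a₃ - a₄‖ ^ 2

def energyPairing (ρ μ α₁ β γ : ℝ) (a₁ a₂ a₃ a₄ b₁ b₂ b₃ b₄ : ℂ) : ℂ :=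
  ρ * a₁ * conj b₁ + μ * a₂ * conj b₂ + α₁ * a₃ * conj b₃
    + β * (γ * a₃ - a₄) * conj (γ * b₃ - b₄)

def powerFlux (α β γ : ℝ) (φ θ v p : ℂ) : ℂ :=
  conj φ * (α * v - γ * β * p) + conj θ * (β * p - γ * β * v)

theorem energyDensity_nonneg (hρ : 0 ≤ ρ) (hμ : 0 ≤ μ) (hα₁ : 0 ≤ α₁) (hβ : 0 ≤ β)
    (a₁ a₂ a₃ a₄ : ℂ) : 0 ≤ energyDensity ρ μ α₁ β γ a₁ a₂ a₃ a₄ := by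
  unfold energyDensity; positivity

theorem Continuous.energyDensity {a₁ a₂ a₃ a₄ : ℝ → ℂ} (h₁ : Continuous a₁)
    (h₂ : Continuous a₂) (h₃ : Continuous a₃) (h₄ : Continuous a₄) :
    Continuous fun x => energyDensity ρ μ α₁ β γ (a₁ x) (a₂ x) (a₃ x) (a₄ x) := by
  unfold _root_.energyDensity; fun_prop

theorem Continuous.energyPairing {a₁ a₂ a₃ a₄ b₁ b₂ b₃ b₄ : ℝ → ℂ} (ha₁ : Continuous a₁)
    (ha₂ : Continuous a₂) (ha₃ : Continuous a₃) (ha₄ : Continuous a₄) (hb₁ : Continuous b₁)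
    (hb₂ : Continuous b₂) (hb₃ : Continuous b₃) (hb₄ : Continuous b₄) :
    Continuous fun x => energyPairing ρ μ α₁ β γ (a₁ x) (a₂ x) (a₃ x) (a₄ x)
      (b₁ x) (b₂ x) (b₃ x) (b₄ x) := by
  unfold _root_.energyPairing; fun_prop

theorem HasDerivAt.powerFlux {φ θ v p : ℝ → ℂ} {dφ dθ dv dp : ℂ} {x : ℝ}
    (hφ : HasDerivAt φ dφ x) (hθ : HasDerivAt θ dθ x) (hv : HasDerivAt v dv x)
    (hp : HasDerivAt p dp x) :
    HasDerivAt (fun y => powerFlux α β γ (φ y) (θ y) (v y) (p y))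
      (powerFlux α β γ dφ dθ (v x) (p x) + powerFlux α β γ (φ x) (θ x) dv dp) x := by
  refine ((hφ.star.mul ((hv.const_mul (α : ℂ)).sub (hp.const_mul ((γ : ℂ) * β)))).add
    (hθ.star.mul ((hp.const_mul (β : ℂ)).sub (hv.const_mul ((γ : ℂ) * β))))).congr_deriv ?_
  simp only [_root_.powerFlux, starRingEnd_apply, Pi.sub_apply]
  ring

theorem re_energyPairing_le (hρ : 0 ≤ ρ) (hμ : 0 ≤ μ) (hα₁ : 0 ≤ α₁) (hβ : 0 ≤ β)
    (a₁ a₂ a₃ a₄ b₁ b₂ b₃ b₄ : ℂ) :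
    (energyPairing ρ μ α₁ β γ a₁ a₂ a₃ a₄ b₁ b₂ b₃ b₄).re
      ≤ √(energyDensity ρ μ α₁ β γ a₁ a₂ a₃ a₄) * √(energyDensity ρ μ α₁ β γ b₁ b₂ b₃ b₄) := by
  let w : Fin 4 → ℝ := ![ρ, μ, α₁, β]
  let a : Fin 4 → ℂ := ![a₁, a₂, a₃, γ * a₃ - a₄]
  let b : Fin 4 → ℂ := ![b₁, b₂, b₃, γ * b₃ - b₄]
  have hw : ∀ i, 0 ≤ w i := by simp [w, Fin.forall_fin_succ, *]
  calc (energyPairing ρ μ α₁ β γ a₁ a₂ a₃ a₄ b₁ b₂ b₃ b₄).re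
      = ∑ i, ((w i : ℂ) * a i * conj (b i)).re := by
        simp only [energyPairing, Fin.sum_univ_four, add_re]
        rfl
    _ ≤ ∑ i, √(w i * ‖a i‖ ^ 2) * √(w i * ‖b i‖ ^ 2) :=
        Finset.sum_le_sum fun i _ => re_ofReal_mul_mul_conj_le (hw i) _ _
    _ ≤ √(∑ i, w i * ‖a i‖ ^ 2) * √(∑ i, w i * ‖b i‖ ^ 2) :=
        Real.sum_sqrt_mul_sqrt_le _ (fun i => by have := hw i; positivity)
          (fun i => by have := hw i; positivity)
    _ = _ := by simp [energyDensity, Fin.sum_univ_four, w, a, b]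

theorem re_energyPairing_eq_neg_re_powerFlux (hα : α = α₁ + γ ^ 2 * β)
    {φ θ v p dφ dθ dv dp g₁ g₂ g₃ g₄ : ℂ}
    (h₁ : g₁ = I * lam * v - dφ)
    (h₂ : I * lam * ρ * φ - α * dv + γ * β * dp = ρ * g₂)
    (h₃ : g₃ = I * lam * p - dθ)
    (h₄ : I * lam * μ * θ - β * dp + γ * β * dv = μ * g₄) :
    (energyPairing ρ μ α₁ β γ g₂ g₄ g₁ g₃ φ θ v p).re =
      -(powerFlux α β γ dφ dθ v p + powerFlux α β γ φ θ dv dp).re := by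
  rw [energyPairing, ← h₂, ← h₄, h₁, h₃, powerFlux, powerFlux, hα]
  simp only [mul_re, mul_im, sub_re, sub_im, add_re, add_im, conj_re, conj_im, I_re, I_im,
    ofReal_re, ofReal_im]
  ring

namespace ResolventData

variable (D : ResolventData ρ μ β m₁ m₂ ξ₁ ξ₂ γ α₁ α L lam)

noncomputable def pairing (x : ℝ) : ℂ :=
  energyPairing ρ μ α₁ β γ (D.f₂ x) (D.f₄ x) (deriv D.f₁ x) (deriv D.f₃ x)
    (D.Φ x) (D.Θ x) (deriv D.V x) (deriv D.P x)

noncomputable def flux (x : ℝ) : ℂ :=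
  powerFlux α β γ (D.Φ x) (D.Θ x) (deriv D.V x) (deriv D.P x)

noncomputable def densityU (x : ℝ) : ℝ :=
  energyDensity ρ μ α₁ β γ (D.Φ x) (D.Θ x) (deriv D.V x) (deriv D.P x)

noncomputable def densityF (x : ℝ) : ℝ :=
  energyDensity ρ μ α₁ β γ (D.f₂ x) (D.f₄ x) (deriv D.f₁ x) (deriv D.f₃ x)

theorem contDiff_deriv_V : ContDiff ℝ 1 (deriv D.V) := D.hV.deriv'

theorem contDiff_deriv_P : ContDiff ℝ 1 (deriv D.P) := D.hP.deriv'

theorem Usq_eq : Usq D = (∫ x in (0 : ℝ)..L, D.densityU x)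
    + m₁ * ‖D.u‖ ^ 2 + m₂ * ‖D.η‖ ^ 2 := rfl

theorem Fsq_eq : Fsq D = (∫ x in (0 : ℝ)..L, D.densityF x)
    + m₁ * ‖D.f₅‖ ^ 2 + m₂ * ‖D.f₆‖ ^ 2 := rfl

theorem continuous_densityU : Continuous D.densityU :=
  D.hΦ.continuous.energyDensity D.hΘ.continuous D.contDiff_deriv_V.continuous
    D.contDiff_deriv_P.continuous

theorem continuous_densityF : Continuous D.densityF :=
  D.hf₂.energyDensity D.hf₄ (D.hf₁.continuous_deriv le_rfl) (D.hf₃.continuous_deriv le_rfl)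

theorem continuous_pairing : Continuous D.pairing :=
  .energyPairing D.hf₂ D.hf₄ (D.hf₁.continuous_deriv le_rfl) (D.hf₃.continuous_deriv le_rfl)
    D.hΦ.continuous D.hΘ.continuous D.contDiff_deriv_V.continuous D.contDiff_deriv_P.continuous

theorem hasDerivAt_flux (x : ℝ) :
    HasDerivAt D.flux (powerFlux α β γ (deriv D.Φ x) (deriv D.Θ x) (deriv D.V x) (deriv D.P x)
      + powerFlux α β γ (D.Φ x) (D.Θ x) (deriv (deriv D.V) x) (deriv (deriv D.P) x)) x :=
  .powerFlux (D.hΦ.differentiable one_ne_zero x).hasDerivAt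
    (D.hΘ.differentiable one_ne_zero x).hasDerivAt
    (D.contDiff_deriv_V.differentiable one_ne_zero x).hasDerivAt
    (D.contDiff_deriv_P.differentiable one_ne_zero x).hasDerivAt

theorem deriv_f₁ {x : ℝ} (hx : x ∈ Ioo 0 L) :
    deriv D.f₁ x = I * lam * deriv D.V x - deriv D.Φ x := by
  rw [(EqOn.mono Ioo_subset_Icc_self fun y hy => (D.eq1 y hy).symm).deriv isOpen_Ioo hx]
  exact (((D.hV.differentiable two_ne_zero x).hasDerivAt.const_mul _).sub
    (D.hΦ.differentiable one_ne_zero x).hasDerivAt).deriv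

theorem deriv_f₃ {x : ℝ} (hx : x ∈ Ioo 0 L) :
    deriv D.f₃ x = I * lam * deriv D.P x - deriv D.Θ x := by
  rw [(EqOn.mono Ioo_subset_Icc_self fun y hy => (D.eq3 y hy).symm).deriv isOpen_Ioo hx]
  exact (((D.hP.differentiable two_ne_zero x).hasDerivAt.const_mul _).sub
    (D.hΘ.differentiable one_ne_zero x).hasDerivAt).deriv

theorem integral_re_pairing (hL : 0 ≤ L) (hα : α = α₁ + γ ^ 2 * β) :
    ∫ x in (0 : ℝ)..L, (D.pairing x).re = (D.flux 0).re - (D.flux L).re := by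
  have hderiv : ∀ x ∈ Ioo 0 L, HasDerivAt (fun y => -(D.flux y).re) (D.pairing x).re x := by
    intro x hx
    have hx' := Ioo_subset_Icc_self hx
    refine (reCLM.hasFDerivAt.comp_hasDerivAt x (D.hasDerivAt_flux x)).neg.congr_deriv ?_
    exact (re_energyPairing_eq_neg_re_powerFlux hα (D.deriv_f₁ hx) (D.eq2 x hx')
      (D.deriv_f₃ hx) (D.eq4 x hx')).symm
  rw [intervalIntegral.integral_eq_sub_of_hasDerivAt_of_le hL
    (fun x _ => (continuous_re.continuousAt.comp (D.hasDerivAt_flux x).continuousAt).neg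
      |>.continuousWithinAt) hderiv
    ((continuous_re.comp D.continuous_pairing).intervalIntegrable 0 L)]
  simp only [Pi.neg_apply, Function.comp_apply]
  ring

theorem dissipation_eq (hL : 0 ≤ L) (hα : α = α₁ + γ ^ 2 * β) :
    ξ₁ * ‖D.u‖ ^ 2 + ξ₂ * ‖D.η‖ ^ 2 = (∫ x in (0 : ℝ)..L, (D.pairing x).re)
      + ((m₁ : ℂ) * D.f₅ * conj D.u).re + ((m₂ : ℂ) * D.f₆ * conj D.η).re := by
  have hu : (α : ℂ) * deriv D.V L - γ * β * deriv D.P L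
      = m₁ * D.f₅ - (I * lam * m₁ + ξ₁) * D.u := by linear_combination D.bu
  have hη : (β : ℂ) * deriv D.P L - γ * β * deriv D.V L
      = m₂ * D.f₆ - (I * lam * m₂ + ξ₂) * D.η := by linear_combination D.bη
  rw [D.integral_re_pairing hL hα]
  simp only [flux, powerFlux, D.bΦ0, D.bΘ0, D.bΦL, D.bΘL, hu, hη, map_zero, zero_mul, add_zero,
    zero_re, add_re, re_conj_mul_feedback]
  ring

theorem integral_re_pairing_le (hρ : 0 ≤ ρ) (hμ : 0 ≤ μ) (hα₁ : 0 ≤ α₁) (hβ : 0 ≤ β)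
    (hL : 0 ≤ L) :
    ∫ x in (0 : ℝ)..L, (D.pairing x).re
      ≤ √(∫ x in (0 : ℝ)..L, D.densityF x) * √(∫ x in (0 : ℝ)..L, D.densityU x) := by
  have hnonneg := energyDensity_nonneg (γ := γ) hρ hμ hα₁ hβ
  refine (intervalIntegral.integral_mono_on hL
    ((continuous_re.comp D.continuous_pairing).intervalIntegrable 0 L)
    ((D.continuous_densityF.sqrt.mul D.continuous_densityU.sqrt).intervalIntegrable 0 L)
    fun x _ => re_energyPairing_le hρ hμ hα₁ hβ ..).trans ?_
  exact intervalIntegral.integral_sqrt_mul_sqrt_le hL D.continuous_densityF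
    D.continuous_densityU (fun x => hnonneg ..) (fun x => hnonneg ..)

theorem dissipation_le (hρ : 0 ≤ ρ) (hμ : 0 ≤ μ) (hα₁ : 0 ≤ α₁) (hβ : 0 ≤ β) (hm₁ : 0 ≤ m₁)
    (hm₂ : 0 ≤ m₂) (hL : 0 ≤ L) (hα : α = α₁ + γ ^ 2 * β) :
    ξ₁ * ‖D.u‖ ^ 2 + ξ₂ * ‖D.η‖ ^ 2 ≤ √(Usq D) * √(Fsq D) := by
  have hnonneg := energyDensity_nonneg (γ := γ) hρ hμ hα₁ hβ
  have hF₀ : 0 ≤ ∫ x in (0 : ℝ)..L, D.densityF x :=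
    intervalIntegral.integral_nonneg hL fun x _ => hnonneg ..
  have hU₀ : 0 ≤ ∫ x in (0 : ℝ)..L, D.densityU x :=
    intervalIntegral.integral_nonneg hL fun x _ => hnonneg ..
  rw [D.dissipation_eq hL hα, Usq_eq, Fsq_eq]
  calc _ ≤ √(∫ x in (0 : ℝ)..L, D.densityF x) * √(∫ x in (0 : ℝ)..L, D.densityU x)
        + √(m₁ * ‖D.f₅‖ ^ 2) * √(m₁ * ‖D.u‖ ^ 2) + √(m₂ * ‖D.f₆‖ ^ 2) * √(m₂ * ‖D.η‖ ^ 2) := by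
        gcongr
        · exact D.integral_re_pairing_le hρ hμ hα₁ hβ hL
        · exact re_ofReal_mul_mul_conj_le hm₁ _ _
        · exact re_ofReal_mul_mul_conj_le hm₂ _ _
    _ ≤ _ := by
        grw [Real.sqrt_mul_sqrt_add_sqrt_mul_sqrt_le hF₀ hU₀ (by positivity) (by positivity),
          Real.sqrt_mul_sqrt_add_sqrt_mul_sqrt_le (by positivity) (by positivity) (by positivity)
            (by positivity)]
        exact (mul_comm _ _).le

theorem tip_le_Fsq (hρ : 0 ≤ ρ) (hμ : 0 ≤ μ) (hα₁ : 0 ≤ α₁) (hβ : 0 ≤ β) (hL : 0 ≤ L) :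
    m₁ * ‖D.f₅‖ ^ 2 + m₂ * ‖D.f₆‖ ^ 2 ≤ Fsq D := by
  rw [Fsq_eq, add_assoc]
  exact le_add_of_nonneg_left
    (intervalIntegral.integral_nonneg hL fun x _ => energyDensity_nonneg hρ hμ hα₁ hβ ..)

theorem boundary_energy_le (hρ : 0 < ρ) (hμ : 0 < μ) (hβ : 0 < β) (hm₁ : 0 < m₁)
    (hm₂ : 0 < m₂) (hξ₁ : 0 < ξ₁) (hξ₂ : 0 < ξ₂) (hL : 0 ≤ L) (hα₁ : 0 < α₁)
    (hα : α = α₁ + γ ^ 2 * β) :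
    ρ * ‖D.Φ L‖ ^ 2 + α₁ * ‖deriv D.V L‖ ^ 2 + μ * ‖D.Θ L‖ ^ 2
        + β * ‖(γ : ℂ) * deriv D.V L - deriv D.P L‖ ^ 2
      ≤ (ρ / ξ₁ + μ / ξ₂ + 2 * (feedbackConst m₁ ξ₁ + γ ^ 2 * feedbackConst m₂ ξ₂) / α₁
          + feedbackConst m₂ ξ₂ / β)
        * ((1 + lam ^ 2) * (√(Usq D) * √(Fsq D)) + Fsq D) := by
  have hdiss := D.dissipation_le hρ.le hμ.le hα₁.le hβ.le hm₁.le hm₂.le hL hα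
  set R := √(Usq D) * √(Fsq D)
  set B := (1 + lam ^ 2) * R + Fsq D
  set W := (γ : ℂ) * deriv D.V L - deriv D.P L
  have htip := D.tip_le_Fsq hρ.le hμ.le hα₁.le hβ.le hL
  have hf₅₀ : 0 ≤ m₁ * ‖D.f₅‖ ^ 2 := by positivity
  have hf₆₀ : 0 ≤ m₂ * ‖D.f₆‖ ^ 2 := by positivity
  have hu₀ : 0 ≤ ξ₁ * ‖D.u‖ ^ 2 := by positivity
  have hη₀ : 0 ≤ ξ₂ * ‖D.η‖ ^ 2 := by positivity
  have hf₅ : m₁ * ‖D.f₅‖ ^ 2 ≤ Fsq D := by linarith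
  have hf₆ : m₂ * ‖D.f₆‖ ^ 2 ≤ Fsq D := by linarith
  have hu : ξ₁ * ‖D.u‖ ^ 2 ≤ R := by linarith
  have hη : ξ₂ * ‖D.η‖ ^ 2 ≤ R := by linarith
  have hRB : R ≤ B := by
    have : 0 ≤ lam ^ 2 * R := by positivity
    linarith
  have hu' : ‖D.u‖ ^ 2 ≤ B / ξ₁ := by rw [le_div_iff₀ hξ₁]; linarith
  have hη' : ‖D.η‖ ^ 2 ≤ B / ξ₂ := by rw [le_div_iff₀ hξ₂]; linarith
  have hW : ‖(β : ℂ) * W‖ ^ 2 ≤ feedbackConst m₂ ξ₂ * B := by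
    rw [show (β : ℂ) * W = (I * lam * m₂ + ξ₂) * D.η - m₂ * D.f₆ by linear_combination -D.bη]
    exact norm_sq_feedback_le hm₂.le hξ₂ hη hf₆
  have hV : ‖(α₁ : ℂ) * deriv D.V L‖ ^ 2
      ≤ 2 * (feedbackConst m₁ ξ₁ * B + γ ^ 2 * (feedbackConst m₂ ξ₂ * B)) := by
    have hαc : (α : ℂ) = α₁ + γ ^ 2 * β := by rw [hα]; push_cast; ring
    rw [show (α₁ : ℂ) * deriv D.V L
        = -(((I * lam * m₁ + ξ₁) * D.u - m₁ * D.f₅) + γ * (β * W)) by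
      linear_combination D.bu - deriv D.V L * hαc, norm_neg]
    refine (norm_add_sq_le_two_mul _ _).trans ?_
    rw [norm_mul _ (_ * W), mul_pow, norm_real, Real.norm_eq_abs, sq_abs]
    gcongr
    exact norm_sq_feedback_le hm₁.le hξ₁ hu hf₅
  calc _ = ρ * ‖D.u‖ ^ 2 + ‖(α₁ : ℂ) * deriv D.V L‖ ^ 2 / α₁ + μ * ‖D.η‖ ^ 2
        + ‖(β : ℂ) * W‖ ^ 2 / β := by
        rw [D.bΦL, D.bΘL, norm_mul, norm_mul, norm_real, norm_real, Real.norm_of_nonneg hα₁.le,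
          Real.norm_of_nonneg hβ.le]
        field_simp
    _ ≤ ρ * (B / ξ₁) + 2 * (feedbackConst m₁ ξ₁ * B + γ ^ 2 * (feedbackConst m₂ ξ₂ * B)) / α₁
        + μ * (B / ξ₂) + feedbackConst m₂ ξ₂ * B / β := by gcongr
    _ = _ := by ring

end ResolventData

/-- Boundary-term estimate in the proof of Theorem 4.5: the boundary energy density at
`x = L` is bounded by `C (1 + λ²) ‖U‖ ‖F‖ + C ‖F‖²`, where `C` depends only on the
physical constants and `L`, not on the resolvent data or on `λ`. -/
theorem boundary_term_estimate
    (ρ μ β m₁ m₂ ξ₁ ξ₂ γ α₁ α L : ℝ)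
    (hρ : 0 < ρ) (hμ : 0 < μ) (hβ : 0 < β) (hm₁ : 0 < m₁) (hm₂ : 0 < m₂)
    (hξ₁ : 0 < ξ₁) (hξ₂ : 0 < ξ₂) (hL : 0 < L) (hα₁ : 0 < α₁)
    (hα : α = α₁ + γ ^ 2 * β) :
    ∃ C > 0, ∀ (lam : ℝ) (D : ResolventData ρ μ β m₁ m₂ ξ₁ ξ₂ γ α₁ α L lam),
      ρ * ‖D.Φ L‖ ^ 2 + α₁ * ‖deriv D.V L‖ ^ 2
          + μ * ‖D.Θ L‖ ^ 2
          + β * ‖(γ : ℂ) * deriv D.V L - deriv D.P L‖ ^ 2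
        ≤ C * (1 + lam ^ 2) * Real.sqrt (Usq D) * Real.sqrt (Fsq D) + C * Fsq D := by
  have hc₁ := feedbackConst_pos hm₁ hξ₁
  have hc₂ := feedbackConst_pos hm₂ hξ₂
  refine ⟨ρ / ξ₁ + μ / ξ₂ + 2 * (feedbackConst m₁ ξ₁ + γ ^ 2 * feedbackConst m₂ ξ₂) / α₁
      + feedbackConst m₂ ξ₂ / β, by positivity, fun lam D => ?_⟩
  exact (D.boundary_energy_le hρ hμ hβ hm₁ hm₂ hξ₁ hξ₂ hL.le hα₁ hα).trans_eq (by ring)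
end
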